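/- arXiv:1603.03666 — 3 statements merged into one kernel-verified Lean document; each statement's English description precedes it below -/
import Mathlib

section
/- Let b : ℝ² → ℝ be smooth with b(x) > α > 0, and define the operator (L f)(v) = -b(x_⊥) · (v_y ∂f/∂v_x - v_x ∂f/∂v_y) acting on smooth functions f : ℝ³ → ℝ of v = (v_x, v_y, v_∥). Then L f = 0 if and only if there exists a function g : ℝ≥0 × ℝ → ℝ with f(v_x, v_y, v_∥) = g(√(v_x² + v_y²), v_∥) for all v. -/
open Real

/-- Chain rule helper: the derivative of `θ ↦ f (a θ, c θ, z)`. -/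
lemma gyro_chain {f : ℝ × ℝ × ℝ → ℝ} (hf : ContDiff ℝ (⊤ : ℕ∞) f)
    {a c : ℝ → ℝ} {a' c' : ℝ} {z θ : ℝ}
    (ha : HasDerivAt a a' θ) (hc : HasDerivAt c c' θ) :
    HasDerivAt (fun t => f (a t, c t, z))
      (a' * fderiv ℝ f (a θ, c θ, z) (1, 0, 0)
        + c' * fderiv ℝ f (a θ, c θ, z) (0, 1, 0)) θ := by
  have hcurve : HasDerivAt (fun t => ((a t, c t, z) : ℝ × ℝ × ℝ)) (a', c', 0) θ :=
    ha.prodMk (hc.prodMk (hasDerivAt_const θ z))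
  have hfd : HasFDerivAt f (fderiv ℝ f (a θ, c θ, z)) (a θ, c θ, z) :=
    (hf.differentiable (by simp) (a θ, c θ, z)).hasFDerivAt
  have := hfd.comp_hasDerivAt θ hcurve
  refine this.congr_deriv ?_
  have h1 : ((a', c', 0) : ℝ × ℝ × ℝ) = a' • (1, 0, 0) + c' • (0, 1, 0) := by
    simp [Prod.ext_iff]
  rw [h1, map_add, map_smul, map_smul]
  simp [smul_eq_mul]

/-- The null space of the gyro-rotation operator
`(L f)(v) = -b(x_⊥) (v_y ∂f/∂v_x - v_x ∂f/∂v_y)` consists exactly of the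
functions of `w = √(v_x² + v_y²)` and `v_∥`. -/
theorem kernel_of_gyro_rotation_operator
    (b : ℝ × ℝ → ℝ) (α : ℝ) (hα : 0 < α)
    (hb : ContDiff ℝ (⊤ : ℕ∞) b) (hbpos : ∀ x, α < b x)
    (x : ℝ × ℝ) (f : ℝ × ℝ × ℝ → ℝ) (hf : ContDiff ℝ (⊤ : ℕ∞) f) :
    (∀ v : ℝ × ℝ × ℝ,
        -b x * (v.2.1 * fderiv ℝ f v (1, 0, 0) - v.1 * fderiv ℝ f v (0, 1, 0)) = 0)
      ↔ ∃ g : ℝ × ℝ → ℝ, ∀ v : ℝ × ℝ × ℝ,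
          f v = g (Real.sqrt (v.1 ^ 2 + v.2.1 ^ 2), v.2.2) := by
  have hbne : -b x ≠ 0 := by
    have := hbpos x; intro h; nlinarith
  constructor
  · intro hL
    have hL' : ∀ v : ℝ × ℝ × ℝ,
        v.2.1 * fderiv ℝ f v (1, 0, 0) - v.1 * fderiv ℝ f v (0, 1, 0) = 0 := by
      intro v
      have := hL v
      exact (mul_eq_zero.1 this).resolve_left hbne
    refine ⟨fun p => f (p.1, 0, p.2), ?_⟩
    rintro ⟨vx, vy, z⟩
    simp only
    set r := Real.sqrt (vx ^ 2 + vy ^ 2) with hr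
    -- the function along the circle of radius r is constant
    set h : ℝ → ℝ := fun θ => f (r * Real.cos θ, r * Real.sin θ, z) with hh
    have hderiv : ∀ θ : ℝ, HasDerivAt h 0 θ := by
      intro θ
      have ha : HasDerivAt (fun t => r * Real.cos t) (r * (-Real.sin θ)) θ :=
        (Real.hasDerivAt_cos θ).const_mul r
      have hc : HasDerivAt (fun t => r * Real.sin t) (r * Real.cos θ) θ :=
        (Real.hasDerivAt_sin θ).const_mul r
      have := gyro_chain (z := z) hf ha hc
      have hzero := hL' (r * Real.cos θ, r * Real.sin θ, z)
      simp only at hzero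
      convert this using 1
      ring_nf
      ring_nf at hzero
      linarith
    have hconst : ∀ θ : ℝ, h θ = h 0 := by
      intro θ
      exact is_const_of_deriv_eq_zero (fun t => (hderiv t).differentiableAt)
        (fun t => (hderiv t).deriv) θ 0
    -- polar representation of (vx, vy)
    set w : ℂ := ⟨vx, vy⟩ with hw
    have habs : ‖w‖ = r := by
      rw [Complex.norm_def, Complex.normSq_mk, hr]
      ring_nf
    have hre : r * Real.cos w.arg = vx := by
      rw [← habs]; exact Complex.norm_mul_cos_arg w
    have him : r * Real.sin w.arg = vy := by
      rw [← habs]; exact Complex.norm_mul_sin_arg w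
    have := hconst w.arg
    rw [hh] at this
    simp only [hre, him, Real.cos_zero, Real.sin_zero, mul_one, mul_zero] at this
    exact this
  · rintro ⟨g, hg⟩ ⟨vx, vy, z⟩
    simp only
    -- f is constant along rotations
    set h : ℝ → ℝ := fun θ =>
      f (vx * Real.cos θ - vy * Real.sin θ, vx * Real.sin θ + vy * Real.cos θ, z) with hh
    have hconst : ∀ θ, h θ = g (Real.sqrt (vx ^ 2 + vy ^ 2), z) := by
      intro θ
      rw [hh]
      simp only
      rw [hg (vx * Real.cos θ - vy * Real.sin θ, vx * Real.sin θ + vy * Real.cos θ, z)]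
      congr 2
      have : (vx * Real.cos θ - vy * Real.sin θ) ^ 2
          + (vx * Real.sin θ + vy * Real.cos θ) ^ 2 = vx ^ 2 + vy ^ 2 := by
        have hc := Real.sin_sq_add_cos_sq θ
        nlinarith
      rw [this]
    -- chain rule at θ = 0
    have ha : HasDerivAt (fun t => vx * Real.cos t - vy * Real.sin t)
        (vx * (-Real.sin 0) - vy * Real.cos 0) 0 :=
      ((Real.hasDerivAt_cos 0).const_mul vx).sub ((Real.hasDerivAt_sin 0).const_mul vy)
    have hc : HasDerivAt (fun t => vx * Real.sin t + vy * Real.cos t)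
        (vx * Real.cos 0 + vy * (-Real.sin 0)) 0 :=
      ((Real.hasDerivAt_sin 0).const_mul vx).add ((Real.hasDerivAt_cos 0).const_mul vy)
    have hchain := gyro_chain (z := z) hf ha hc
    simp only [Real.cos_zero, Real.sin_zero, mul_zero, mul_one, neg_zero, sub_zero,
      add_zero, zero_sub, mul_neg, zero_add] at hchain ha hc
    -- h is constant, so its derivative is 0
    have hcd : HasDerivAt h 0 0 := by
      have : h = fun _ => g (Real.sqrt (vx ^ 2 + vy ^ 2), z) := funext hconst
      rw [this]; exact hasDerivAt_const 0 _
    have heq := hchain.unique hcd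
    have : vy * fderiv ℝ f (vx, vy, z) (1, 0, 0)
        - vx * fderiv ℝ f (vx, vy, z) (0, 1, 0) = 0 := by linarith
    rw [this, mul_zero]
end

section
/- Let b : ℝ² → ℝ be smooth, positive, time-independent, and let φ : ℝ³ → ℝ be smooth. Consider the characteristic ODE system ẋ_⊥ = U_⊥(x_⊥) := -(1/b)(∇_{x_⊥}φ + (w²/(2b))∇_{x_⊥}b)^⊥ and ẇ = u_w := (w/(2b²)) ∇^⊥_{x_⊥}b · ∇_{x_⊥}φ, where a^⊥ = (a₂, -a₁). Then the magnetic moment μ(t) = w(t)²/(2 b(x_⊥(t))) is constant along any solution: dμ/dt = 0. -/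
open Real

/-- Rotation by `-π/2` in the plane: `(a₁,a₂)^⊥ = (a₂,-a₁)`. -/
def perp2 (a : ℝ × ℝ) : ℝ × ℝ := (a.2, -a.1)

/-- Planar gradient of a function of `x_⊥ ∈ ℝ²`. -/
noncomputable def grad2 (g : ℝ × ℝ → ℝ) (x : ℝ × ℝ) : ℝ × ℝ :=
  (fderiv ℝ g x (1, 0), fderiv ℝ g x (0, 1))

lemma fderiv_eq_grad2 (g : ℝ × ℝ → ℝ) (p : ℝ × ℝ) (v : ℝ × ℝ) :
    fderiv ℝ g p v = (grad2 g p).1 * v.1 + (grad2 g p).2 * v.2 := by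
  have hv : v = v.1 • ((1 : ℝ), (0 : ℝ)) + v.2 • ((0 : ℝ), (1 : ℝ)) := by
    ext <;> simp
  rw [hv, map_add, map_smul, map_smul]
  simp [grad2, mul_comm]

/-- Along the characteristic flow
`ẋ_⊥ = U_⊥ = -(1/b)(∇φ + (w²/(2b))∇b)^⊥`, `ẇ = u_w = (w/(2b²)) ∇^⊥b·∇φ`,
the magnetic moment `μ = w²/(2 b(x_⊥))` is conserved. -/
theorem magnetic_moment_invariant
    (b : ℝ × ℝ → ℝ) (φ : ℝ × ℝ → ℝ)
    (hb : ContDiff ℝ (⊤ : ℕ∞) b) (hφ : ContDiff ℝ (⊤ : ℕ∞) φ) (hbpos : ∀ x, 0 < b x)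
    (x : ℝ → ℝ × ℝ) (w : ℝ → ℝ)
    (hx : ∀ t, HasDerivAt x
      ((-(1 / b (x t))) •
        perp2 (grad2 φ (x t) + ((w t) ^ 2 / (2 * b (x t))) • grad2 b (x t))) t)
    (hw : ∀ t, HasDerivAt w
      ((w t / (2 * (b (x t)) ^ 2)) *
        ((perp2 (grad2 b (x t))).1 * (grad2 φ (x t)).1
          + (perp2 (grad2 b (x t))).2 * (grad2 φ (x t)).2)) t) :
    ∀ t, HasDerivAt (fun s => (w s) ^ 2 / (2 * b (x s))) 0 t := by
  intro t
  set V := ((-(1 / b (x t))) •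
      perp2 (grad2 φ (x t) + ((w t) ^ 2 / (2 * b (x t))) • grad2 b (x t))) with hV
  have hbx : (0 : ℝ) < b (x t) := hbpos (x t)
  have hbne : b (x t) ≠ 0 := ne_of_gt hbx
  -- derivative of b ∘ x
  have hbfd : HasFDerivAt b (fderiv ℝ b (x t)) (x t) :=
    (hb.differentiable (by simp) (x t)).hasFDerivAt
  have hB : HasDerivAt (fun s => b (x s))
      ((grad2 b (x t)).1 * V.1 + (grad2 b (x t)).2 * V.2) t := by
    have := hbfd.comp_hasDerivAt t (hx t)
    rwa [fderiv_eq_grad2] at this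
  have hD : HasDerivAt (fun s => 2 * b (x s))
      (2 * ((grad2 b (x t)).1 * V.1 + (grad2 b (x t)).2 * V.2)) t :=
    hB.const_mul 2
  have hN : HasDerivAt (fun s => (w s) ^ 2)
      (2 * w t ^ 1 * ((w t / (2 * (b (x t)) ^ 2)) *
        ((perp2 (grad2 b (x t))).1 * (grad2 φ (x t)).1
          + (perp2 (grad2 b (x t))).2 * (grad2 φ (x t)).2))) t := by
    simpa using (hw t).fun_pow 2
  have hDne : 2 * b (x t) ≠ 0 := by positivity
  have h := hN.fun_div hD hDne
  refine h.congr_deriv ?_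
  set gb1 := (grad2 b (x t)).1
  set gb2 := (grad2 b (x t)).2
  set gφ1 := (grad2 φ (x t)).1
  set gφ2 := (grad2 φ (x t)).2
  have hV1 : V.1 = (-(1 / b (x t))) * (gφ2 + ((w t) ^ 2 / (2 * b (x t))) * gb2) := by
    simp [hV, perp2, grad2, gb1, gb2, gφ1, gφ2]
  have hV2 : V.2 = (-(1 / b (x t))) * (-(gφ1 + ((w t) ^ 2 / (2 * b (x t))) * gb1)) := by
    simp [hV, perp2, grad2, gb1, gb2, gφ1, gφ2]
  rw [hV1, hV2]
  simp only [perp2]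
  field_simp
  ring
end

section
/- Let b : ℝ² → ℝ be smooth positive and φ : ℝ² → ℝ smooth. The vector field V(x_⊥, w) = (U_⊥(x_⊥,w), u_w(x_⊥,w)) on ℝ² × (0,∞), with U_⊥ = -(1/b)(∇φ + (w²/2b)∇b)^⊥ and u_w = (w/2b²)∇^⊥b·∇φ, is divergence-free with respect to the measure w dw dx_⊥: ∇_{x_⊥}·(w U_⊥) + ∂_w(w u_w) = 0. -/
open Real

private lemma pd_diff {f : ℝ × ℝ → ℝ} (hf : ContDiff ℝ (⊤ : ℕ∞) f) (v : ℝ × ℝ) :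
    Differentiable ℝ (fun y => fderiv ℝ f y v) := by
  have h : ContDiff ℝ 1 (fderiv ℝ f) := hf.fderiv_right (WithTop.coe_le_coe.mpr le_top)
  exact (h.differentiable one_ne_zero).clm_apply (differentiable_const v)

private lemma clairaut {f : ℝ × ℝ → ℝ} (hf : ContDiff ℝ (⊤ : ℕ∞) f) (x u v : ℝ × ℝ) :
    fderiv ℝ (fun y => fderiv ℝ f y u) x v = fderiv ℝ (fun y => fderiv ℝ f y v) x u := by
  have hdiff : DifferentiableAt ℝ (fderiv ℝ f) x :=
    ((hf.fderiv_right (m := 1) (WithTop.coe_le_coe.mpr le_top)).differentiable one_ne_zero) x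
  have h1 : ∀ a : ℝ × ℝ, fderiv ℝ (fun y => fderiv ℝ f y a) x =
      (fderiv ℝ (fderiv ℝ f) x).flip a := by
    intro a
    rw [fderiv_clm_apply hdiff (differentiableAt_const a)]
    simp
  have hs := (hf.contDiffAt (x := x)).isSymmSndFDerivAt (by rw [minSmoothness_of_isRCLikeNormedField]; exact WithTop.coe_le_coe.mpr (le_top : (2:ℕ∞) ≤ ⊤))
  rw [h1 u, h1 v]
  simpa using hs v u

private lemma Dmul {f g : ℝ × ℝ → ℝ} {x v : ℝ × ℝ} (hf : DifferentiableAt ℝ f x)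
    (hg : DifferentiableAt ℝ g x) :
    fderiv ℝ (fun y => f y * g y) x v = f x * fderiv ℝ g x v + g x * fderiv ℝ f x v := by
  rw [fderiv_fun_mul hf hg]; simp

private lemma Dinv {g : ℝ × ℝ → ℝ} {x v : ℝ × ℝ} (hg : DifferentiableAt ℝ g x)
    (h0 : g x ≠ 0) :
    fderiv ℝ (fun y => (g y)⁻¹) x v = -fderiv ℝ g x v / g x ^ 2 := by
  have hc : (fun y => (g y)⁻¹) = (fun t : ℝ => t⁻¹) ∘ g := rfl
  rw [hc, fderiv_comp x (differentiableAt_inv h0) hg]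
  simp [fderiv_inv]
  ring

private lemma Dsq {g : ℝ × ℝ → ℝ} {x v : ℝ × ℝ} (hg : DifferentiableAt ℝ g x) :
    fderiv ℝ (fun y => (g y) ^ 2) x v = 2 * g x * fderiv ℝ g x v := by
  have hc : (fun y => (g y) ^ 2) = fun y => g y * g y := by
    funext y; ring
  rw [hc, Dmul hg hg]; ring

/-- the drift field `(U_⊥, u_w)` is divergence-free with respect
to the measure `w dw dx_⊥`: `∇_{x_⊥}·(w U_⊥) + ∂_w(w u_w) = 0`. -/
theorem drift_field_measure_divergence_free
    (b : ℝ × ℝ → ℝ) (φ : ℝ × ℝ → ℝ)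
    (hb : ContDiff ℝ (⊤ : ℕ∞) b) (hφ : ContDiff ℝ (⊤ : ℕ∞) φ) (hbpos : ∀ x, 0 < b x)
    (U : ℝ × ℝ → ℝ → ℝ × ℝ)
    (hU : ∀ x w, U x w = (-(1 / b x)) •
      perp2 (grad2 φ x + (w ^ 2 / (2 * b x)) • grad2 b x))
    (uw : ℝ × ℝ → ℝ → ℝ)
    (huw : ∀ x w, uw x w = (w / (2 * (b x) ^ 2)) *
      ((perp2 (grad2 b x)).1 * (grad2 φ x).1 + (perp2 (grad2 b x)).2 * (grad2 φ x).2)) :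
    ∀ (x : ℝ × ℝ) (w : ℝ), 0 < w →
      fderiv ℝ (fun y => w * (U y w).1) x (1, 0)
        + fderiv ℝ (fun y => w * (U y w).2) x (0, 1)
        + deriv (fun s => s * uw x s) w = 0 := by
  intro x w hw
  -- abbreviations for partial derivatives
  set P1 : ℝ × ℝ → ℝ := fun y => fderiv ℝ φ y (1, 0) with hP1
  set P2 : ℝ × ℝ → ℝ := fun y => fderiv ℝ φ y (0, 1) with hP2
  set B1 : ℝ × ℝ → ℝ := fun y => fderiv ℝ b y (1, 0) with hB1
  set B2 : ℝ × ℝ → ℝ := fun y => fderiv ℝ b y (0, 1) with hB2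
  have hbne : ∀ y, b y ≠ 0 := fun y => (hbpos y).ne'
  have hbdiff : ∀ y, DifferentiableAt ℝ b y := fun y => (hb.differentiable (by simp)).differentiableAt
  have hP1d : Differentiable ℝ P1 := pd_diff hφ (1, 0)
  have hP2d : Differentiable ℝ P2 := pd_diff hφ (0, 1)
  have hB1d : Differentiable ℝ B1 := pd_diff hb (1, 0)
  have hB2d : Differentiable ℝ B2 := pd_diff hb (0, 1)
  have hBinv : ∀ y, DifferentiableAt ℝ (fun z => (b z)⁻¹) y := fun y =>
    (hbdiff y).inv (hbne y)
  have hBsq : DifferentiableAt ℝ (fun z => (b z) ^ 2) x := ((hbdiff x).mul (hbdiff x)).congr_of_eventuallyEq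
    (by filter_upwards with z using by rw [Pi.mul_apply]; ring)
  have hBsqinv : DifferentiableAt ℝ (fun z => ((b z) ^ 2)⁻¹) x :=
    hBsq.inv (pow_ne_zero 2 (hbne x))
  -- rewrite the three terms
  have e1 : (fun y => w * (U y w).1) =
      fun y => (-w) * (P2 y * (b y)⁻¹) + (-(w ^ 3) / 2) * (B2 y * ((b y) ^ 2)⁻¹) := by
    funext y
    rw [hU]
    simp only [perp2, grad2, Prod.smul_fst, Prod.smul_snd, Prod.fst_add, Prod.snd_add,
      smul_eq_mul, Prod.mk_add_mk, Prod.smul_mk]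
    field_simp
    simp only [hP2, hB2]
    have hby := hbne y
    field_simp
    ring
  have e2 : (fun y => w * (U y w).2) =
      fun y => w * (P1 y * (b y)⁻¹) + (w ^ 3 / 2) * (B1 y * ((b y) ^ 2)⁻¹) := by
    funext y
    rw [hU]
    simp only [perp2, grad2, Prod.smul_fst, Prod.smul_snd, Prod.fst_add, Prod.snd_add,
      smul_eq_mul, Prod.mk_add_mk, Prod.smul_mk]
    field_simp
    simp only [hP1, hB1]
    have hby := hbne y
    field_simp
  have e3 : (fun s => s * uw x s) =
      fun s => ((B2 x * P1 x - B1 x * P2 x) / (2 * (b x) ^ 2)) * s ^ 2 := by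
    funext s
    rw [huw]
    simp only [perp2, grad2]
    field_simp
    ring
  -- the w-derivative term
  have T3 : deriv (fun s => s * uw x s) w = (B2 x * P1 x - B1 x * P2 x) / (b x) ^ 2 * w := by
    rw [e3, deriv_const_mul _ (differentiableAt_pow 2), deriv_pow_field]
    field_simp
    ring
  -- the x-derivative terms
  have key : ∀ (c₁ c₂ : ℝ) (F G : ℝ × ℝ → ℝ) (v : ℝ × ℝ),
      DifferentiableAt ℝ F x → DifferentiableAt ℝ G x →
      fderiv ℝ (fun y => c₁ * F y + c₂ * G y) x v
        = c₁ * fderiv ℝ F x v + c₂ * fderiv ℝ G x v := by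
    intro c₁ c₂ F G v hF hG
    rw [fderiv_fun_add ((hF.const_mul c₁)) ((hG.const_mul c₂)), fderiv_const_mul hF,
      fderiv_const_mul hG]
    simp
  have T1 : fderiv ℝ (fun y => w * (U y w).1) x (1, 0)
      = (-w) * (P2 x * (-B1 x / b x ^ 2) + (b x)⁻¹ * fderiv ℝ P2 x (1, 0))
        + (-(w ^ 3) / 2) * (B2 x * (-(2 * b x * B1 x) / (b x ^ 2) ^ 2)
          + ((b x) ^ 2)⁻¹ * fderiv ℝ B2 x (1, 0)) := by
    rw [e1, key _ _ (fun y => P2 y * (b y)⁻¹) (fun y => B2 y * ((b y) ^ 2)⁻¹) _ ((hP2d x).mul (hBinv x)) ((hB2d x).mul hBsqinv),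
      Dmul (hP2d x) (hBinv x), Dmul (hB2d x) hBsqinv, Dinv (hbdiff x) (hbne x),
      Dinv hBsq (pow_ne_zero 2 (hbne x)), Dsq (hbdiff x)]
  have T2 : fderiv ℝ (fun y => w * (U y w).2) x (0, 1)
      = w * (P1 x * (-B2 x / b x ^ 2) + (b x)⁻¹ * fderiv ℝ P1 x (0, 1))
        + (w ^ 3 / 2) * (B1 x * (-(2 * b x * B2 x) / (b x ^ 2) ^ 2)
          + ((b x) ^ 2)⁻¹ * fderiv ℝ B1 x (0, 1)) := by
    rw [e2, key _ _ (fun y => P1 y * (b y)⁻¹) (fun y => B1 y * ((b y) ^ 2)⁻¹) _ ((hP1d x).mul (hBinv x)) ((hB1d x).mul hBsqinv),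
      Dmul (hP1d x) (hBinv x), Dmul (hB1d x) hBsqinv, Dinv (hbdiff x) (hbne x),
      Dinv hBsq (pow_ne_zero 2 (hbne x)), Dsq (hbdiff x)]
  -- Clairaut
  have cφ : fderiv ℝ P2 x (1, 0) = fderiv ℝ P1 x (0, 1) := clairaut hφ x (0, 1) (1, 0)
  have cb : fderiv ℝ B2 x (1, 0) = fderiv ℝ B1 x (0, 1) := clairaut hb x (0, 1) (1, 0)
  rw [T1, T2, T3, cφ, cb]
  field_simp
  ring
end
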